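/- Define L_n^{(α)}(x,δ) ∈ ℝ[x] by L_{-1}=0, L_0=1, and (n+1)L_{n+1}^{(α)}(x,δ) + (x - (2n+α+1+n(2n+2α+1)δ)) L_n^{(α)}(x,δ) + (n+α)(1+(n-1)δ)(1+(n+α)δ) L_{n-1}^{(α)}(x,δ) = 0. Then for all n ≥ 0, L_n^{(α)}(0,δ) = binom(n+α, n) ∏_{j=0}^{n-1}(1 + jδ). -/

import Mathlib

/-!
The closed form `c n = binom(n + α, n) ∏_{j<n} (1 + jδ)` has the ratio
`c (n + 1) / c n = (n + α + 1)(1 + nδ) / (n + 1)`. Expressing `c (n + 2)` and `c (n + 1)` through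
`c n` turns the three-term recurrence at `x = 0` into a polynomial identity in `n, α, δ`, so `c`
and `n ↦ L_n^{(α)}(0, δ)` agree by two-step induction.
-/

open Finset

/-- Generalized binomial coefficient `binom(a, k)` via falling factorials. -/
noncomputable def rbinom (a : ℝ) (k : ℕ) : ℝ :=
  (∏ i ∈ Finset.range k, (a - i)) / (Nat.factorial k)

/-- Deformed Laguerre polynomials `L_n^{(α)}(x,δ)` defined by the three-term recurrence
`(n+1) L_{n+1} + (x - (2n+α+1+n(2n+2α+1)δ)) L_n + (n+α)(1+(n-1)δ)(1+(n+α)δ) L_{n-1} = 0`,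
`L_{-1} = 0`, `L_0 = 1` (so `L_1 = α + 1 - x`). -/
noncomputable def deformedLaguerre (α δ : ℝ) : ℕ → ℝ → ℝ
  | 0, _ => 1
  | 1, x => α + 1 - x
  | (n + 2), x =>
      (((2 * ((n : ℝ) + 1) + α + 1 + ((n : ℝ) + 1) * (2 * ((n : ℝ) + 1) + 2 * α + 1) * δ) - x)
          * deformedLaguerre α δ (n + 1) x
        - ((n : ℝ) + 1 + α) * (1 + (n : ℝ) * δ) * (1 + ((n : ℝ) + 1 + α) * δ)
          * deformedLaguerre α δ n x) / ((n : ℝ) + 2)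

noncomputable def deformedLaguerreAtZero (α δ : ℝ) (n : ℕ) : ℝ :=
  rbinom ((n : ℝ) + α) n * ∏ j ∈ Finset.range n, (1 + (j : ℝ) * δ)

theorem rbinom_add_one_succ (a : ℝ) (k : ℕ) :
    rbinom (a + 1) (k + 1) = (a + 1) / (k + 1) * rbinom a k := by
  have hprod : ∏ i ∈ range (k + 1), (a + 1 - i) = (a + 1) * ∏ i ∈ range k, (a - i) := by
    rw [prod_range_succ', mul_comm]
    congr 1
    · push_cast
      ring
    · refine prod_congr rfl fun i _ => ?_
      push_cast
      ring
  simp only [rbinom, hprod, Nat.factorial_succ, Nat.cast_mul, Nat.cast_succ]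
  field_simp

theorem deformedLaguerreAtZero_succ (α δ : ℝ) (n : ℕ) :
    deformedLaguerreAtZero α δ (n + 1)
      = (n + α + 1) * (1 + n * δ) / (n + 1) * deformedLaguerreAtZero α δ n := by
  have hbinom := rbinom_add_one_succ ((n : ℝ) + α) n
  rw [show (n : ℝ) + α + 1 = ((n + 1 : ℕ) : ℝ) + α by push_cast; ring] at hbinom
  simp only [deformedLaguerreAtZero, hbinom, prod_range_succ]
  push_cast
  ring

theorem deformedLaguerreAtZero_recurrence (α δ : ℝ) (n : ℕ) :
    deformedLaguerreAtZero α δ (n + 2) * ((n : ℝ) + 2)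
      = (2 * ((n : ℝ) + 1) + α + 1 + ((n : ℝ) + 1) * (2 * ((n : ℝ) + 1) + 2 * α + 1) * δ)
          * deformedLaguerreAtZero α δ (n + 1)
        - ((n : ℝ) + 1 + α) * (1 + (n : ℝ) * δ) * (1 + ((n : ℝ) + 1 + α) * δ)
          * deformedLaguerreAtZero α δ n := by
  rw [deformedLaguerreAtZero_succ α δ (n + 1), deformedLaguerreAtZero_succ α δ n]
  push_cast
  field_simp
  ring

theorem deformedLaguerre_value_at_zero_general (α δ : ℝ) (n : ℕ) :
    deformedLaguerre α δ n 0
      = rbinom ((n : ℝ) + α) n * ∏ j ∈ Finset.range n, (1 + (j : ℝ) * δ) := by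
  change deformedLaguerre α δ n 0 = deformedLaguerreAtZero α δ n
  induction n using Nat.twoStepInduction with
  | zero => simp [deformedLaguerre, deformedLaguerreAtZero, rbinom]
  | one => simp [deformedLaguerre, deformedLaguerreAtZero, rbinom, add_comm]
  | more n ih₀ ih₁ =>
    rw [deformedLaguerre, ih₀, ih₁, sub_zero, div_eq_iff (by positivity),
      deformedLaguerreAtZero_recurrence]

theorem deformedLaguerre_value_at_zero (α δ : ℝ) (hα : -1 < α) (hδ : 0 < δ) (n : ℕ) :
    deformedLaguerre α δ n 0
      = rbinom ((n : ℝ) + α) n * ∏ j ∈ Finset.range n, (1 + (j : ℝ) * δ) :=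
  deformedLaguerre_value_at_zero_general α δ n
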